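/- Two non-trivial elements of finite order in PGL_2(k) over a field k, each having exactly two fixed points in P^1(k), have the same set of fixed points if and only if the subgroup they generate is cyclic. -/

import Mathlib

open Matrix

/-- The projective general linear group `PGL₂(k)`. -/
abbrev PGL2 (k : Type*) [Field k] := GL (Fin 2) k ⧸ Subgroup.center (GL (Fin 2) k)

/-- A matrix `g ∈ GL₂(k)` fixes the point `x ∈ ℙ¹(k)`. -/
def ProjFixes {k : Type*} [Field k] (g : GL (Fin 2) k) (x : Projectivization k (Fin 2 → k)) : Prop :=
  ∃ c : kˣ, Matrix.mulVec (g : Matrix (Fin 2) (Fin 2) k) x.rep = (c : k) • x.rep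

/-- An element of `PGL₂(k)` fixes a point of `ℙ¹(k)`. -/
def PGLFixes {k : Type*} [Field k] (γ : PGL2 k) (x : Projectivization k (Fin 2 → k)) : Prop :=
  ∃ g : GL (Fin 2) k, (QuotientGroup.mk g : PGL2 k) = γ ∧ ProjFixes g x

namespace SameFixedAux

open Projectivization

variable {k : Type*} [Field k]

/-- A transvection as a unit of the matrix ring. -/
def tUnit (t : TransvectionStruct (Fin 2) k) : GL (Fin 2) k :=
  ⟨t.toMatrix, t.inv.toMatrix, t.mul_inv, t.inv_mul⟩

theorem exists_scalar_of_mem_center {z : GL (Fin 2) k}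
    (hz : z ∈ Subgroup.center (GL (Fin 2) k)) :
    ∃ c : kˣ, (z : Matrix (Fin 2) (Fin 2) k) = (c : k) • 1 := by
  have h : ∀ t : TransvectionStruct (Fin 2) k,
      Commute t.toMatrix (z : Matrix (Fin 2) (Fin 2) k) := by
    intro t
    have h1 := Subgroup.mem_center_iff.mp hz (tUnit t)
    have h2 := congrArg Units.val h1
    simpa [tUnit, Commute, SemiconjBy] using h2
  obtain ⟨c, hc⟩ := Matrix.mem_range_scalar_of_commute_transvectionStruct h
  have hc0 : c ≠ 0 := by
    rintro rfl
    have h3 : (z : Matrix (Fin 2) (Fin 2) k) * ((z⁻¹ : GL (Fin 2) k) : Matrix (Fin 2) (Fin 2) k) = 1 := by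
      rw [← Units.val_mul, mul_inv_cancel, Units.val_one]
    rw [← hc] at h3
    simp at h3
  refine ⟨Units.mk0 c hc0, ?_⟩
  rw [← hc]
  simp [Matrix.smul_one_eq_diagonal]

theorem mem_center_of_scalar {g : GL (Fin 2) k} {c : k}
    (h : (g : Matrix (Fin 2) (Fin 2) k) = c • 1) :
    g ∈ Subgroup.center (GL (Fin 2) k) := by
  refine Subgroup.mem_center_iff.mpr fun h' => ?_
  ext : 1
  rw [Units.val_mul, Units.val_mul, h, smul_mul_assoc, mul_smul_comm, one_mul, mul_one]


theorem gl_inj (g : GL (Fin 2) k) :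
    Function.Injective (Matrix.mulVecLin (g : Matrix (Fin 2) (Fin 2) k)) := by
  have : Function.LeftInverse (Matrix.mulVecLin ((g⁻¹ : GL (Fin 2) k) : Matrix (Fin 2) (Fin 2) k))
      (Matrix.mulVecLin (g : Matrix (Fin 2) (Fin 2) k)) := by
    intro v
    simp only [Matrix.mulVecLin_apply, Matrix.mulVec_mulVec, ← Units.val_mul,
      inv_mul_cancel, Units.val_one, Matrix.one_mulVec]
  exact this.injective

theorem mulVec_ne_zero (g : GL (Fin 2) k) {v : Fin 2 → k} (hv : v ≠ 0) :
    Matrix.mulVec (g : Matrix (Fin 2) (Fin 2) k) v ≠ 0 := by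
  intro h
  apply hv
  apply gl_inj g
  simpa using h

/-- The action of `GL₂(k)` on the projective line. -/
noncomputable def pact (g : GL (Fin 2) k) :
    Projectivization k (Fin 2 → k) → Projectivization k (Fin 2 → k) :=
  Projectivization.map (Matrix.mulVecLin (g : Matrix (Fin 2) (Fin 2) k)) (gl_inj g)

theorem pact_mk (g : GL (Fin 2) k) (v : Fin 2 → k) (hv : v ≠ 0) :
    pact g (Projectivization.mk k v hv) =
      Projectivization.mk k (Matrix.mulVec (g : Matrix (Fin 2) (Fin 2) k) v)
        (mulVec_ne_zero g hv) := by
  simpa [pact] using Projectivization.map_mk (Matrix.mulVecLin (g : Matrix (Fin 2) (Fin 2) k)) (gl_inj g) v hv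

theorem pact_mul (g h : GL (Fin 2) k) (z : Projectivization k (Fin 2 → k)) :
    pact (g * h) z = pact g (pact h z) := by
  conv_lhs => rw [← z.mk_rep]
  conv_rhs => rw [← z.mk_rep]
  rw [pact_mk, pact_mk, pact_mk]
  simp only [Matrix.mulVec_mulVec, Units.val_mul]

theorem pact_one (z : Projectivization k (Fin 2 → k)) : pact (1 : GL (Fin 2) k) z = z := by
  conv_lhs => rw [← z.mk_rep]
  rw [pact_mk]
  simp only [Units.val_one, Matrix.one_mulVec]
  exact z.mk_rep

theorem projFixes_iff (g : GL (Fin 2) k) (z : Projectivization k (Fin 2 → k)) :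
    ProjFixes g z ↔ pact g z = z := by
  conv_rhs => rw [← z.mk_rep]
  rw [pact_mk, Projectivization.mk_eq_mk_iff]
  constructor
  · rintro ⟨c, hc⟩
    exact ⟨c, by simp [Units.smul_def, hc]⟩
  · rintro ⟨a, ha⟩
    exact ⟨a, by simp only [Units.smul_def] at ha; rw [ha]⟩


theorem pact_central {z : GL (Fin 2) k} (hz : z ∈ Subgroup.center (GL (Fin 2) k))
    (w : Projectivization k (Fin 2 → k)) : pact z w = w := by
  obtain ⟨c, hc⟩ := exists_scalar_of_mem_center hz
  conv_lhs => rw [← w.mk_rep]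
  conv_rhs => rw [← w.mk_rep]
  rw [pact_mk, Projectivization.mk_eq_mk_iff]
  exact ⟨c, by simp [Units.smul_def, hc, Matrix.smul_mulVec]⟩

theorem pact_congr {g g' : GL (Fin 2) k}
    (h : (QuotientGroup.mk g : PGL2 k) = QuotientGroup.mk g') : pact g = pact g' := by
  have hz : g⁻¹ * g' ∈ Subgroup.center (GL (Fin 2) k) := QuotientGroup.eq.mp h
  funext w
  have : g' = g * (g⁻¹ * g') := by group
  rw [this, pact_mul, pact_central hz]

/-- The action of `PGL₂(k)` on the projective line. -/
noncomputable def Fq (γ : PGL2 k) :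
    Projectivization k (Fin 2 → k) → Projectivization k (Fin 2 → k) :=
  pact (Quotient.out γ)

theorem Fq_mk (g : GL (Fin 2) k) : Fq (QuotientGroup.mk g : PGL2 k) = pact g :=
  pact_congr (QuotientGroup.out_eq' _)

theorem pglFixes_iff (γ : PGL2 k) (z : Projectivization k (Fin 2 → k)) :
    PGLFixes γ z ↔ Fq γ z = z := by
  constructor
  · rintro ⟨g, rfl, hg⟩
    rw [Fq_mk]
    exact (projFixes_iff g z).mp hg
  · intro h
    exact ⟨Quotient.out γ, QuotientGroup.out_eq' γ, (projFixes_iff _ z).mpr h⟩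

theorem Fq_mul (γ δ : PGL2 k) (z : Projectivization k (Fin 2 → k)) :
    Fq (γ * δ) z = Fq γ (Fq δ z) := by
  have h1 : Fq (γ * δ) = pact (Quotient.out γ * Quotient.out δ) := by
    rw [show γ * δ = QuotientGroup.mk (Quotient.out γ * Quotient.out δ) by
      rw [QuotientGroup.mk_mul, QuotientGroup.out_eq', QuotientGroup.out_eq'], Fq_mk]
  rw [h1, pact_mul]; rfl

theorem Fq_one (z : Projectivization k (Fin 2 → k)) : Fq (1 : PGL2 k) z = z := by
  rw [show (1 : PGL2 k) = QuotientGroup.mk 1 from rfl, Fq_mk, pact_one]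

theorem Fq_inj (γ : PGL2 k) {a b : Projectivization k (Fin 2 → k)}
    (h : Fq γ a = Fq γ b) : a = b := by
  have := congrArg (Fq γ⁻¹) h
  rwa [← Fq_mul, ← Fq_mul, inv_mul_cancel, Fq_one, Fq_one] at this


theorem indep_of_ne {x y : Projectivization k (Fin 2 → k)} (h : x ≠ y) :
    LinearIndependent k ![x.rep, y.rep] := by
  rw [linearIndependent_fin2]
  refine ⟨by simpa using y.rep_nonzero, fun a ha => ?_⟩
  simp only [Matrix.cons_val_one, Matrix.head_cons, Matrix.cons_val_zero] at ha
  apply h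
  have ha0 : a ≠ 0 := by
    rintro rfl
    exact x.rep_nonzero (by simpa using ha.symm)
  rw [← x.mk_rep, ← y.mk_rep, Projectivization.mk_eq_mk_iff]
  exact ⟨Units.mk0 a ha0, ha⟩

theorem scalar_of_basis {v w : Fin 2 → k} (hvw : LinearIndependent k ![v, w])
    {A : Matrix (Fin 2) (Fin 2) k} {t : k}
    (hv : Matrix.mulVec A v = t • v) (hw : Matrix.mulVec A w = t • w) :
    A = t • 1 := by
  have hcard : Fintype.card (Fin 2) = Module.finrank k (Fin 2 → k) := by
    simp
  let b : Module.Basis (Fin 2) k (Fin 2 → k) := basisOfLinearIndependentOfCardEqFinrank hvw hcard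
  have hb : ⇑b = ![v, w] := coe_basisOfLinearIndependentOfCardEqFinrank hvw hcard
  have : Matrix.mulVecLin A = Matrix.mulVecLin (t • 1) := by
    apply b.ext
    intro i
    fin_cases i <;>
      simp [hb, hv, hw, Matrix.smul_mulVec]
  ext i j
  have := congrFun (congrArg (fun f => f (Pi.single j 1)) (congrArg DFunLike.coe this)) i
  simpa [Matrix.mulVec_single_one, Matrix.one_apply, Pi.single_apply] using this


theorem smul_cancel {v : Fin 2 → k} (hv : v ≠ 0) {a b : k} (h : a • v = b • v) : a = b := by
  by_contra hab
  have h0 : (a - b) • v = 0 := by rw [sub_smul, h, sub_self]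
  rcases smul_eq_zero.mp h0 with h' | h'
  · exact hab (sub_eq_zero.mp h')
  · exact hv h'

/-- If `pact g` sends `x` to `y`, we get a scalar `c` with `g *ᵥ x.rep = c • y.rep`. -/
theorem pact_eq_iff (g : GL (Fin 2) k) (x y : Projectivization k (Fin 2 → k)) :
    pact g x = y ↔ ∃ c : kˣ, Matrix.mulVec (g : Matrix (Fin 2) (Fin 2) k) x.rep = (c : k) • y.rep := by
  conv_lhs => rw [← x.mk_rep, pact_mk, ← y.mk_rep, Projectivization.mk_eq_mk_iff]
  constructor
  · rintro ⟨c, hc⟩; exact ⟨c, by rw [← hc]; simp [Units.smul_def]⟩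
  · rintro ⟨c, hc⟩; exact ⟨c, by rw [hc]; simp [Units.smul_def]⟩

theorem sq_eq_one_of_swap {δ : PGL2 k} {x y : Projectivization k (Fin 2 → k)} (hxy : x ≠ y)
    (h1 : Fq δ x = y) (h2 : Fq δ y = x) : δ ^ 2 = 1 := by
  set g := Quotient.out δ with hg
  obtain ⟨c, hc⟩ := (pact_eq_iff g x y).mp h1
  obtain ⟨d, hd⟩ := (pact_eq_iff g y x).mp h2
  have hsx : Matrix.mulVec ((g ^ 2 : GL (Fin 2) k) : Matrix (Fin 2) (Fin 2) k) x.rep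
      = ((c : k) * d) • x.rep := by
    rw [sq, Units.val_mul, ← Matrix.mulVec_mulVec, hc, Matrix.mulVec_smul, hd, smul_smul]
  have hsy : Matrix.mulVec ((g ^ 2 : GL (Fin 2) k) : Matrix (Fin 2) (Fin 2) k) y.rep
      = ((c : k) * d) • y.rep := by
    rw [sq, Units.val_mul, ← Matrix.mulVec_mulVec, hd, Matrix.mulVec_smul, hc, smul_smul,
      mul_comm]
  have hscal : ((g ^ 2 : GL (Fin 2) k) : Matrix (Fin 2) (Fin 2) k) = ((c : k) * d) • 1 :=
    scalar_of_basis (indep_of_ne hxy) hsx hsy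
  have hc2 : g ^ 2 ∈ Subgroup.center (GL (Fin 2) k) := mem_center_of_scalar hscal
  calc δ ^ 2 = (QuotientGroup.mk g : PGL2 k) ^ 2 := by rw [QuotientGroup.out_eq']
    _ = (QuotientGroup.mk (g ^ 2) : PGL2 k) := rfl
    _ = 1 := (QuotientGroup.eq_one_iff _).mpr hc2


/-- The stabilizer of the pair of points `x`, `y` in `PGL₂(k)`. -/
noncomputable def stab (x y : Projectivization k (Fin 2 → k)) : Subgroup (PGL2 k) where
  carrier := {η | Fq η x = x ∧ Fq η y = y}
  one_mem' := ⟨Fq_one x, Fq_one y⟩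
  mul_mem' := by
    rintro a b ⟨ha1, ha2⟩ ⟨hb1, hb2⟩
    exact ⟨by rw [Fq_mul, hb1, ha1], by rw [Fq_mul, hb2, ha2]⟩
  inv_mem' := by
    rintro a ⟨h1, h2⟩
    constructor
    · conv_lhs => rw [← h1]
      rw [← Fq_mul, inv_mul_cancel, Fq_one]
    · conv_lhs => rw [← h2]
      rw [← Fq_mul, inv_mul_cancel, Fq_one]

theorem mem_stab_iff {x y : Projectivization k (Fin 2 → k)} (η : PGL2 k) :
    η ∈ stab x y ↔ Fq η x = x ∧ Fq η y = y := Iff.rfl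

theorem projFixes_out_of_mem_stab {x y : Projectivization k (Fin 2 → k)} {η : PGL2 k}
    (h : η ∈ stab x y) : ProjFixes (Quotient.out η) x ∧ ProjFixes (Quotient.out η) y :=
  ⟨(projFixes_iff _ x).mpr h.1, (projFixes_iff _ y).mpr h.2⟩

/-- The eigenvalue of (a lift of) `η` at the fixed point `z`. -/
noncomputable def eig {g : GL (Fin 2) k} {z : Projectivization k (Fin 2 → k)}
    (h : ProjFixes g z) : kˣ := h.choose

theorem eig_spec {g : GL (Fin 2) k} {z : Projectivization k (Fin 2 → k)} (h : ProjFixes g z) :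
    Matrix.mulVec (g : Matrix (Fin 2) (Fin 2) k) z.rep = ((eig h : k)) • z.rep := h.choose_spec

/-- The ratio of eigenvalues map on the stabilizer of `{x, y}`. -/
noncomputable def ratio (x y : Projectivization k (Fin 2 → k)) (η : (stab x y)) : kˣ :=
  eig (projFixes_out_of_mem_stab η.2).1 * (eig (projFixes_out_of_mem_stab η.2).2)⁻¹

theorem ratio_mul (x y : Projectivization k (Fin 2 → k)) (η ξ : (stab x y)) :
    ratio x y (η * ξ) = ratio x y η * ratio x y ξ := by
  set gη := Quotient.out (η : PGL2 k) with hgη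
  set gξ := Quotient.out (ξ : PGL2 k) with hgξ
  set gm := Quotient.out ((η * ξ : (stab x y)) : PGL2 k) with hgm
  have hmk : (QuotientGroup.mk (gη * gξ) : PGL2 k) = QuotientGroup.mk gm := by
    rw [QuotientGroup.mk_mul, QuotientGroup.out_eq', QuotientGroup.out_eq',
      QuotientGroup.out_eq']
    rfl
  obtain ⟨zc, hzc_mem, hzc⟩ : ∃ zc ∈ Subgroup.center (GL (Fin 2) k), gm = (gη * gξ) * zc := by
    have := QuotientGroup.eq.mp hmk
    exact ⟨_, this, by group⟩
  obtain ⟨c, hc⟩ := exists_scalar_of_mem_center hzc_mem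
  have key : ∀ (z : Projectivization k (Fin 2 → k)) (hm : ProjFixes gm z)
      (hη : ProjFixes gη z) (hξ : ProjFixes gξ z),
      (eig hm : k) = (c : k) * (eig hξ : k) * (eig hη : k) := by
    intro z hm hη hξ
    apply smul_cancel z.rep_nonzero
    rw [← eig_spec hm, hzc, Units.val_mul, Units.val_mul, ← Matrix.mulVec_mulVec,
      ← Matrix.mulVec_mulVec, hc, Matrix.smul_mulVec, Matrix.one_mulVec]
    simp only [Matrix.mulVec_smul, eig_spec hξ, eig_spec hη, smul_smul]
  have hx := key x (projFixes_out_of_mem_stab (η * ξ).2).1 (projFixes_out_of_mem_stab η.2).1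
    (projFixes_out_of_mem_stab ξ.2).1
  have hy := key y (projFixes_out_of_mem_stab (η * ξ).2).2 (projFixes_out_of_mem_stab η.2).2
    (projFixes_out_of_mem_stab ξ.2).2
  unfold ratio
  ext
  push_cast
  rw [hx, hy]
  field_simp

/-- The eigenvalue-ratio homomorphism on the two-point stabilizer. -/
noncomputable def ratioHom (x y : Projectivization k (Fin 2 → k)) : (stab x y) →* kˣ :=
  MonoidHom.mk' (ratio x y) (ratio_mul x y)

theorem ratioHom_injective {x y : Projectivization k (Fin 2 → k)} (hxy : x ≠ y) :
    Function.Injective (ratioHom x y) := by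
  rw [injective_iff_map_eq_one]
  intro η hη
  have h1 : (eig (projFixes_out_of_mem_stab η.2).1 : kˣ)
      = eig (projFixes_out_of_mem_stab η.2).2 := by
    have := mul_inv_eq_one.mp hη
    exact this
  set g := Quotient.out (η : PGL2 k) with hg
  have hsx := eig_spec (projFixes_out_of_mem_stab η.2).1
  have hsy := eig_spec (projFixes_out_of_mem_stab η.2).2
  rw [h1] at hsx
  have hscal : (g : Matrix (Fin 2) (Fin 2) k)
      = ((eig (projFixes_out_of_mem_stab η.2).2 : k)) • 1 :=
    scalar_of_basis (indep_of_ne hxy) hsx hsy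
  have : (η : PGL2 k) = 1 := by
    rw [← QuotientGroup.out_eq' (η : PGL2 k)]
    exact (QuotientGroup.eq_one_iff _).mpr (mem_center_of_scalar hscal)
  exact Subtype.ext this


theorem forward {γ γ' : PGL2 k}
    (hfo : IsOfFinOrder γ) (hfo' : IsOfFinOrder γ')
    {x y : Projectivization k (Fin 2 → k)} (hxy : x ≠ y)
    (hfix : {z | PGLFixes γ z} = {x, y})
    (hsame : {z | PGLFixes γ z} = {z | PGLFixes γ' z}) :
    IsCyclic ↥(Subgroup.closure ({γ, γ'} : Set (PGL2 k))) := by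
  set H := Subgroup.closure ({γ, γ'} : Set (PGL2 k)) with hH
  have hx1 : x ∈ {z | PGLFixes γ z} := by rw [hfix]; exact Set.mem_insert _ _
  have hy1 : y ∈ {z | PGLFixes γ z} := by rw [hfix]; exact Set.mem_insert_of_mem _ rfl
  have hx2 : x ∈ {z | PGLFixes γ' z} := hsame ▸ hx1
  have hy2 : y ∈ {z | PGLFixes γ' z} := hsame ▸ hy1
  have hmemx : ∀ δ ∈ ({γ, γ'} : Set (PGL2 k)), Fq δ x = x ∧ Fq δ y = y := by
    rintro δ (rfl | rfl)
    · exact ⟨(pglFixes_iff _ x).mp hx1, (pglFixes_iff _ y).mp hy1⟩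
    · exact ⟨(pglFixes_iff _ x).mp hx2, (pglFixes_iff _ y).mp hy2⟩
  have hHS : H ≤ stab x y := by
    rw [hH, Subgroup.closure_le]
    intro δ hδ
    exact (mem_stab_iff δ).mpr (hmemx δ hδ)
  set Ψ : ↥H →* kˣ := (ratioHom x y).comp (Subgroup.inclusion hHS) with hΨ
  have hΨinj : Function.Injective Ψ :=
    (ratioHom_injective hxy).comp (Subgroup.inclusion_injective hHS)
  have hcomm : ∀ a b : ↥H, a * b = b * a := fun a b =>
    hΨinj (by rw [_root_.map_mul, _root_.map_mul, mul_comm])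
  set n := orderOf γ * orderOf γ' with hn
  have hγmem : γ ∈ H := Subgroup.subset_closure (Set.mem_insert _ _)
  have hγ'mem : γ' ∈ H := Subgroup.subset_closure (Set.mem_insert_of_mem _ rfl)
  have hpow : ∀ h ∈ H, h ^ n = 1 := by
    intro h hh
    refine Subgroup.closure_induction ?_ ?_ ?_ ?_ hh
    · rintro δ (rfl | rfl)
      · rw [hn, pow_mul, pow_orderOf_eq_one, one_pow]
      · rw [hn, mul_comm, pow_mul, pow_orderOf_eq_one, one_pow]
    · exact one_pow n
    · intro a b ha hb hpa hpb
      have hab : a * b = b * a :=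
        Subtype.ext_iff.mp (hcomm ⟨a, ha⟩ ⟨b, hb⟩)
      rw [(Commute.mul_pow hab n : (a * b) ^ n = a ^ n * b ^ n), hpa, hpb, one_mul]
    · intro a _ hpa
      rw [inv_pow, hpa, inv_one]
  have hn0 : n ≠ 0 :=
    Nat.mul_ne_zero hfo.orderOf_pos.ne' hfo'.orderOf_pos.ne'
  have hroots : ∀ h : ↥H, Ψ h ∈ rootsOfUnity n k := by
    intro h
    rw [mem_rootsOfUnity, ← _root_.map_pow]
    have : h ^ n = 1 := Subtype.ext (hpow (h : PGL2 k) h.2)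
    rw [this, _root_.map_one]
  haveI : NeZero n := ⟨hn0⟩
  haveI := Classical.decEq k
  haveI : Finite ↥H := by
    refine Finite.of_injective (fun h : ↥H => (⟨Ψ h, hroots h⟩ : rootsOfUnity n k)) ?_
    intro a b hab
    exact hΨinj (Subtype.ext_iff.mp hab)
  exact isCyclic_of_subgroup_isDomain ((Units.coeHom k).comp Ψ)
    (fun a b hab => hΨinj (Units.ext hab))


theorem backward {γ γ' : PGL2 k} (hγ : γ ≠ 1) (hγ' : γ' ≠ 1)
    {x y x' y' : Projectivization k (Fin 2 → k)} (hxy : x ≠ y) (hxy' : x' ≠ y')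
    (hfix : {z | PGLFixes γ z} = {x, y})
    (hfix' : {z | PGLFixes γ' z} = {x', y'})
    (hcyc : IsCyclic ↥(Subgroup.closure ({γ, γ'} : Set (PGL2 k)))) :
    {z | PGLFixes γ z} = {z | PGLFixes γ' z} := by
  set H := Subgroup.closure ({γ, γ'} : Set (PGL2 k)) with hH
  have hγmem : γ ∈ H := Subgroup.subset_closure (Set.mem_insert _ _)
  have hγ'mem : γ' ∈ H := Subgroup.subset_closure (Set.mem_insert_of_mem _ rfl)
  obtain ⟨σ, hσ⟩ := hcyc.exists_generator
  have hcommH : ∀ a b : ↥H, a * b = b * a := by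
    intro a b
    obtain ⟨i, hi⟩ := Subgroup.mem_zpowers_iff.mp (hσ a)
    obtain ⟨j, hj⟩ := Subgroup.mem_zpowers_iff.mp (hσ b)
    rw [← hi, ← hj, ← _root_.zpow_add, ← _root_.zpow_add, add_comm]
  have hcomm : γ * γ' = γ' * γ :=
    Subtype.ext_iff.mp (hcommH ⟨γ, hγmem⟩ ⟨γ', hγ'mem⟩)
  have hx1 : x ∈ {z | PGLFixes γ z} := by rw [hfix]; exact Set.mem_insert _ _
  have hy1 : y ∈ {z | PGLFixes γ z} := by rw [hfix]; exact Set.mem_insert_of_mem _ rfl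
  have hγx : Fq γ x = x := (pglFixes_iff γ x).mp hx1
  have hγy : Fq γ y = y := (pglFixes_iff γ y).mp hy1
  have hmem1 : Fq γ' x ∈ ({x, y} : Set (Projectivization k (Fin 2 → k))) := by
    rw [← hfix]
    exact (pglFixes_iff γ _).mpr (by rw [← Fq_mul, hcomm, Fq_mul, hγx])
  have hmem2 : Fq γ' y ∈ ({x, y} : Set (Projectivization k (Fin 2 → k))) := by
    rw [← hfix]
    exact (pglFixes_iff γ _).mpr (by rw [← Fq_mul, hcomm, Fq_mul, hγy])
  simp only [Set.mem_insert_iff, Set.mem_singleton_iff] at hmem1 hmem2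
  rcases hmem1 with h1 | h1
  · -- γ' fixes x, hence also y, hence same fixed sets
    have h2 : Fq γ' y = y := by
      rcases hmem2 with h2 | h2
      · exact absurd (Fq_inj γ' (h2.trans h1.symm)) (Ne.symm hxy)
      · exact h2
    have hxm : x ∈ ({x', y'} : Set (Projectivization k (Fin 2 → k))) := by
      rw [← hfix']; exact (pglFixes_iff γ' x).mpr h1
    have hym : y ∈ ({x', y'} : Set (Projectivization k (Fin 2 → k))) := by
      rw [← hfix']; exact (pglFixes_iff γ' y).mpr h2
    simp only [Set.mem_insert_iff, Set.mem_singleton_iff] at hxm hym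
    have hpair : ({x', y'} : Set (Projectivization k (Fin 2 → k))) = {x, y} := by
      rcases hxm with hxm' | hxm'
      · rcases hym with h | h
        · exact absurd (hxm'.trans h.symm) hxy
        · rw [← hxm', ← h]
      · rcases hym with h | h
        · rw [← hxm', ← h, Set.pair_comm]
        · exact absurd (hxm'.trans h.symm) hxy
    rw [hfix, hfix', hpair]
  · -- γ' swaps x and y : derive a contradiction
    have h2 : Fq γ' y = x := by
      rcases hmem2 with h2 | h2
      · exact h2
      · exact absurd (Fq_inj γ' (h2.trans h1.symm)) (Ne.symm hxy)
    exfalso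
    have hsq' : γ' ^ 2 = 1 := sq_eq_one_of_swap hxy h1 h2
    have hsqm : (γ * γ') ^ 2 = 1 :=
      sq_eq_one_of_swap hxy (by rw [Fq_mul, h1, hγy]) (by rw [Fq_mul, h2, hγx])
    have hsqγ : γ ^ 2 = 1 := by
      have hexp : (γ * γ') ^ 2 = γ ^ 2 * γ' ^ 2 := by
        rw [sq, sq, sq, mul_assoc, ← mul_assoc γ' γ γ', ← hcomm, mul_assoc, ← mul_assoc]
      rw [hexp, hsq', mul_one] at hsqm
      exact hsqm
    -- every element of H squares to 1
    have hsq_all : ∀ h ∈ H, h ^ 2 = 1 := by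
      intro h hh
      refine Subgroup.closure_induction ?_ ?_ ?_ ?_ hh
      · rintro δ (rfl | rfl)
        · exact hsqγ
        · exact hsq'
      · exact one_pow 2
      · intro a b ha hb hpa hpb
        have hab : a * b = b * a := Subtype.ext_iff.mp (hcommH ⟨a, ha⟩ ⟨b, hb⟩)
        rw [(Commute.mul_pow hab 2 : (a * b) ^ 2 = a ^ 2 * b ^ 2), hpa, hpb, one_mul]
      · intro a _ hpa
        rw [inv_pow, hpa, inv_one]
    have hσ2 : σ ^ 2 = 1 := Subtype.ext (hsq_all (σ : PGL2 k) σ.2)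
    have key : ∀ a : ↥H, a = 1 ∨ a = σ := by
      intro a
      obtain ⟨i, hi⟩ := Subgroup.mem_zpowers_iff.mp (hσ a)
      rcases Int.even_or_odd i with ⟨m, hm⟩ | ⟨m, hm⟩
      · left
        rw [← hi, hm, ← two_mul, _root_.zpow_mul,
          show ((2:ℤ)) = ((2:ℕ):ℤ) from rfl, zpow_natCast, hσ2, _root_.one_zpow]
      · right
        rw [← hi, hm, _root_.zpow_add, _root_.zpow_mul,
          show ((2:ℤ)) = ((2:ℕ):ℤ) from rfl, zpow_natCast, hσ2, _root_.one_zpow, one_mul, zpow_one]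
    have hgeq : γ = γ' := by
      rcases key ⟨γ, hγmem⟩ with h | h
      · exact absurd (Subtype.ext_iff.mp h) hγ
      · rcases key ⟨γ', hγ'mem⟩ with h' | h'
        · exact absurd (Subtype.ext_iff.mp h') hγ'
        · exact (Subtype.ext_iff.mp h).trans (Subtype.ext_iff.mp h').symm
    rw [← hgeq] at h1
    exact hxy (hγx.symm.trans h1)

end SameFixedAux

/-- Two non-trivial finite-order elements of `PGL₂(k)`, each with exactly two fixed
points on `ℙ¹(k)`, have the same fixed points iff they generate a cyclic group. -/
theorem same_fixed_points_iff_cyclic {k : Type*} [Field k]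
    (γ γ' : PGL2 k) (hγ : γ ≠ 1) (hγ' : γ' ≠ 1)
    (hfo : IsOfFinOrder γ) (hfo' : IsOfFinOrder γ')
    (h2 : ∃ x y : Projectivization k (Fin 2 → k), x ≠ y ∧ {z | PGLFixes γ z} = {x, y})
    (h2' : ∃ x y : Projectivization k (Fin 2 → k), x ≠ y ∧ {z | PGLFixes γ' z} = {x, y}) :
    {z | PGLFixes γ z} = {z | PGLFixes γ' z} ↔
      IsCyclic ↥(Subgroup.closure ({γ, γ'} : Set (PGL2 k))) := by
  obtain ⟨x, y, hxy, hfix⟩ := h2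
  obtain ⟨x', y', hxy', hfix'⟩ := h2'
  constructor
  · intro hsame
    exact SameFixedAux.forward hfo hfo' hxy hfix hsame
  · intro hcyc
    exact SameFixedAux.backward hγ hγ' hxy hxy' hfix hfix' hcyc
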